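/- Every integer n ≥ 28 can be written as x² + T_y + T_z with x, y, z ∈ ℕ and z ≥ 7. -/

import Mathlib

/-!
Writing `n = x² + T_y + T_z` is the same as `4n + 1 = (2x)² + (y + z + 1)² + (y - z)²`. So a
representation `4n + 1 = (2u)² + (2v)² + (2w + 1)²` with `v ≤ u` gives one with `x = v` and
`z = u + w`; when `u + w < 7` we have `n < 79`, and those `n` are checked by computation.

For `N ≡ 1 (mod 4)`, Dirichlet's theorem gives a prime `p ≡ 1 (mod 4)` with `p ≡ -1 (mod N)`.
By quadratic reciprocity `-N` is a square mod `p`, which produces `b, c` with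
`N (p c - b²) = p³ + 1`: the positive definite integral ternary form with Gram matrix
`!![N, 0, p; 0, p, b; p, b, c]` has determinant `1` and represents `N`. Completing the square at
a minimal vector gives Hermite's bounds `3 m² ≤ 4 det` and `27 m³ ≤ 64 det` for the minimum `m`
in dimensions two and three, so a unimodular form has minimum `1`, splits off a square, and is
equivalent to `x² + y² + z²`.
-/

open Matrix

def IsPrimitiveVec {n : Type*} (v : n → ℤ) : Prop := ∀ d : ℤ, (∀ i, d ∣ v i) → IsUnit d

namespace Matrix

variable {n : Type*} {A U : Matrix n n ℤ}

lemma PosDef.isSymm_int (hA : A.PosDef) : A.IsSymm := isHermitian_iff_isSymm.mp hA.isHermitian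

variable [Fintype n]

lemma PosDef.dotProduct_mulVec_pos_int (hA : A.PosDef) {v : n → ℤ} (hv : v ≠ 0) :
    0 < v ⬝ᵥ A *ᵥ v := by
  simpa using hA.dotProduct_mulVec_pos hv

lemma posDef_of_isSymm_of_pos (hA : A.IsSymm) (hpos : ∀ v ≠ 0, 0 < v ⬝ᵥ A *ᵥ v) : A.PosDef :=
  .of_dotProduct_mulVec_pos (isHermitian_iff_isSymm.mpr hA) (by simpa using hpos)

lemma dotProduct_transpose_mul_mul_mulVec (w : n → ℤ) :
    w ⬝ᵥ (Uᵀ * A * U) *ᵥ w = (U *ᵥ w) ⬝ᵥ A *ᵥ (U *ᵥ w) := by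
  rw [← mulVec_mulVec, ← mulVec_mulVec, dotProduct_mulVec, vecMul_transpose]

lemma PosDef.isPrimitiveVec_of_le (hA : A.PosDef) {v : n → ℤ} (hv : v ≠ 0)
    (hmin : ∀ w ≠ 0, v ⬝ᵥ A *ᵥ v ≤ w ⬝ᵥ A *ᵥ w) : IsPrimitiveVec v := by
  intro d hd
  choose w hw using hd
  have hvw : v = d • w := funext fun i => hw i
  have hw0 : w ≠ 0 := by rintro rfl; exact hv (by simp [hvw])
  have hd0 : d ≠ 0 := by rintro rfl; exact hv (by simp [hvw])
  have hq : v ⬝ᵥ A *ᵥ v = d ^ 2 * (w ⬝ᵥ A *ᵥ w) := by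
    rw [hvw, mulVec_smul, smul_dotProduct, dotProduct_smul, smul_eq_mul, smul_eq_mul]; ring
  have hd1 : d ^ 2 ≤ 1 := by
    nlinarith [hmin w hw0, hA.dotProduct_mulVec_pos_int hw0]
  have : -1 ≤ d := by nlinarith
  have : d ≤ 1 := by nlinarith
  rw [Int.isUnit_iff]
  omega

variable [DecidableEq n]

lemma PosDef.exists_min_int [Nonempty n] (hA : A.PosDef) :
    ∃ v ≠ 0, ∀ w ≠ 0, v ⬝ᵥ A *ᵥ v ≤ w ⬝ᵥ A *ᵥ w := by
  obtain ⟨_, ⟨v, hv, rfl⟩, hmin⟩ := Int.exists_least_of_bdd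
    (P := fun m => ∃ v ≠ 0, v ⬝ᵥ A *ᵥ v = m)
    ⟨0, by rintro _ ⟨v, hv, rfl⟩; exact (hA.dotProduct_mulVec_pos_int hv).le⟩
    ⟨_, Pi.single (Classical.arbitrary n) 1, by simp, rfl⟩
  exact ⟨v, hv, fun w hw => hmin _ ⟨w, hw, rfl⟩⟩

lemma mulVec_injective_of_det_eq_one (hU : U.det = 1) : Function.Injective U.mulVec :=
  mulVec_injective_of_isUnit ((isUnit_iff_isUnit_det U).mpr (by simp [hU]))

lemma PosDef.transpose_mul_mul (hA : A.PosDef) (hU : U.det = 1) : (Uᵀ * A * U).PosDef := by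
  simpa [conjTranspose_eq_transpose_of_trivial] using
    hA.conjTranspose_mul_mul_same (mulVec_injective_of_det_eq_one hU)

lemma det_transpose_mul_mul (hU : U.det = 1) : (Uᵀ * A * U).det = A.det := by
  simp [hU]

lemma PosDef.exists_transpose_mul_mul_corner_eq {i₀ : n}
    (hcompl : ∀ v : n → ℤ, IsPrimitiveVec v → ∃ U : Matrix n n ℤ, U.det = 1 ∧ U.col i₀ = v)
    (hA : A.PosDef) {v : n → ℤ} (hv : v ≠ 0) (hmin : ∀ w ≠ 0, v ⬝ᵥ A *ᵥ v ≤ w ⬝ᵥ A *ᵥ w) :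
    ∃ U : Matrix n n ℤ, U.det = 1 ∧ (Uᵀ * A * U) i₀ i₀ = v ⬝ᵥ A *ᵥ v ∧
      ∀ w ≠ 0, v ⬝ᵥ A *ᵥ v ≤ w ⬝ᵥ (Uᵀ * A * U) *ᵥ w := by
  obtain ⟨U, hU, hUv⟩ := hcompl v (hA.isPrimitiveVec_of_le hv hmin)
  refine ⟨U, hU, ?_, fun w hw => ?_⟩
  · simpa [mulVec_single_one, hUv] using
      dotProduct_transpose_mul_mul_mulVec (A := A) (U := U) (Pi.single i₀ 1)
  · rw [dotProduct_transpose_mul_mul_mulVec]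
    exact hmin _ fun h => hw (mulVec_injective_of_det_eq_one hU (by rw [h, mulVec_zero]))

end Matrix

lemma IsPrimitiveVec.natAbs_eq_one {n : Type*} {v : n → ℤ} (hv : IsPrimitiveVec v) {d : ℤ}
    (hd : ∀ i, d ∣ v i) : d.natAbs = 1 :=
  Int.isUnit_iff_natAbs_eq.mp (hv d hd)

lemma IsPrimitiveVec.isCoprime_fin_two {v : Fin 2 → ℤ} (hv : IsPrimitiveVec v) :
    IsCoprime (v 0) (v 1) :=
  Int.isCoprime_iff_gcd_eq_one.mpr <| by
    simpa using hv.natAbs_eq_one (d := Int.gcd (v 0) (v 1))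
      (Fin.forall_fin_two.mpr ⟨Int.gcd_dvd_left .., Int.gcd_dvd_right ..⟩)

lemma IsPrimitiveVec.isCoprime_fin_three {v : Fin 3 → ℤ} (hv : IsPrimitiveVec v) :
    IsCoprime (Int.gcd (v 0) (v 1) : ℤ) (v 2) :=
  Int.isCoprime_iff_gcd_eq_one.mpr <| by
    simpa using hv.natAbs_eq_one (d := Int.gcd (Int.gcd (v 0) (v 1)) (v 2)) <| by
      refine Fin.forall_fin_succ.mpr ⟨?_, Fin.forall_fin_two.mpr ⟨?_, Int.gcd_dvd_right ..⟩⟩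
      · exact (Int.gcd_dvd_left ..).trans (Int.gcd_dvd_left ..)
      · exact (Int.gcd_dvd_left ..).trans (Int.gcd_dvd_right ..)

lemma Int.exists_eq_gcd_mul_isCoprime (a b : ℤ) :
    ∃ a' b' : ℤ, IsCoprime a' b' ∧ a = Int.gcd a b * a' ∧ b = Int.gcd a b * b' := by
  rcases (Int.gcd a b).eq_zero_or_pos with hg | hg
  · obtain ⟨rfl, rfl⟩ := Int.gcd_eq_zero_iff.mp hg
    exact ⟨1, 0, isCoprime_one_left, by simp, by simp⟩
  · obtain ⟨a', b', h, ha, hb⟩ := Int.exists_gcd_one hg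
    exact ⟨a', b', Int.isCoprime_iff_gcd_eq_one.mpr h, by linear_combination ha,
      by linear_combination hb⟩

namespace Matrix

lemma exists_det_eq_one_col_eq_fin_two (v : Fin 2 → ℤ) (hv : IsPrimitiveVec v) :
    ∃ U : Matrix (Fin 2) (Fin 2) ℤ, U.det = 1 ∧ U.col 0 = v := by
  obtain ⟨s, t, hst⟩ := hv.isCoprime_fin_two
  refine ⟨!![v 0, -t; v 1, s], ?_, ?_⟩
  · rw [det_fin_two_of]; linear_combination hst
  · ext i; fin_cases i <;> rfl

lemma exists_det_eq_one_col_eq_fin_three (v : Fin 3 → ℤ) (hv : IsPrimitiveVec v) :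
    ∃ U : Matrix (Fin 3) (Fin 3) ℤ, U.det = 1 ∧ U.col 0 = v := by
  obtain ⟨a, b, ⟨s, t, hst⟩, ha, hb⟩ := Int.exists_eq_gcd_mul_isCoprime (v 0) (v 1)
  obtain ⟨u, w, huw⟩ := hv.isCoprime_fin_three
  refine ⟨!![v 0, -t, -w * a; v 1, s, -w * b; v 2, 0, u], ?_, ?_⟩
  · rw [det_fin_three]
    simp only [of_apply, cons_val', cons_val_zero, cons_val_one, cons_val_two, empty_val',
      cons_val_fin_one, head_cons, tail_cons, head_fin_const]
    generalize (Int.gcd (v 0) (v 1) : ℤ) = g at *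
    rw [ha, hb]
    linear_combination (u * g + w * v 2) * hst + huw
  · ext i; fin_cases i <;> rfl

end Matrix

lemma Int.exists_four_mul_sq_le (m s : ℤ) (hm : 0 < m) : ∃ q : ℤ, 4 * (m * q + s) ^ 2 ≤ m ^ 2 := by
  have hdiv := Int.emod_add_mul_ediv s m
  have h0 := Int.emod_nonneg s hm.ne'
  have h1 := Int.emod_lt_of_pos s hm
  rcases le_or_gt (2 * (s % m)) m with h | h
  · refine ⟨-(s / m), ?_⟩
    nlinarith
  · refine ⟨-(s / m) - 1, ?_⟩
    nlinarith

namespace Matrix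

section

variable {A : Matrix (Fin 2) (Fin 2) ℤ}

lemma IsSymm.mul_dotProduct_mulVec_fin_two (hA : A.IsSymm) (w : Fin 2 → ℤ) :
    A 0 0 * (w ⬝ᵥ A *ᵥ w) = (A 0 0 * w 0 + A 0 1 * w 1) ^ 2 + A.det * w 1 ^ 2 := by
  simp only [dotProduct, mulVec, Fin.sum_univ_two, det_fin_two, hA.apply 0 1]
  ring

theorem PosDef.three_mul_sq_le_det_fin_two (hA : A.PosDef) {v : Fin 2 → ℤ} (hv : v ≠ 0)
    (hmin : ∀ w ≠ 0, v ⬝ᵥ A *ᵥ v ≤ w ⬝ᵥ A *ᵥ w) :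
    3 * (v ⬝ᵥ A *ᵥ v) ^ 2 ≤ 4 * A.det := by
  obtain ⟨U, hU, hcorner, hle⟩ :=
    hA.exists_transpose_mul_mul_corner_eq exists_det_eq_one_col_eq_fin_two hv hmin
  have hB := (hA.transpose_mul_mul hU).isSymm_int
  rw [← det_transpose_mul_mul hU (A := A)]
  set B := Uᵀ * A * U
  set m := v ⬝ᵥ A *ᵥ v
  have hm : 0 < m := hA.dotProduct_mulVec_pos_int hv
  -- `m ≤ B[q, 1]`, while `m B[q, 1] = (m q + B 0 1)² + det B ≤ m² / 4 + det B` for a good `q`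
  obtain ⟨q, hq⟩ := Int.exists_four_mul_sq_le m (B 0 1) hm
  have hle := hle ![q, 1] (by simp [funext_iff, Fin.forall_fin_two])
  have hid := hB.mul_dotProduct_mulVec_fin_two ![q, 1]
  simp only [hcorner, cons_val_zero, cons_val_one, mul_one, one_pow] at hid
  nlinarith

end

/-- `B 0 0` times the Schur complement of the corner entry `B 0 0`, which keeps it integral. -/
def scaledSchurComplement (B : Matrix (Fin 3) (Fin 3) ℤ) : Matrix (Fin 2) (Fin 2) ℤ :=
  of fun i j => B 0 0 * B i.succ j.succ - B 0 i.succ * B 0 j.succ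

section

variable {A B : Matrix (Fin 3) (Fin 3) ℤ}

lemma isSymm_scaledSchurComplement (hB : B.IsSymm) : (scaledSchurComplement B).IsSymm := by
  ext i j
  simp only [scaledSchurComplement, transpose_apply, of_apply, hB.apply i.succ j.succ]
  ring

lemma IsSymm.mul_dotProduct_mulVec_cons (hB : B.IsSymm) (x : ℤ) (y : Fin 2 → ℤ) :
    B 0 0 * (Fin.cons x y ⬝ᵥ B *ᵥ Fin.cons x y) = (B 0 0 * x + B 0 1 * y 0 + B 0 2 * y 1) ^ 2 +
      y ⬝ᵥ scaledSchurComplement B *ᵥ y := by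
  simp only [dotProduct, mulVec, Fin.sum_univ_succ, Fin.cons_zero, Fin.cons_succ,
    Fin.succ_zero_eq_one, Fin.succ_one_eq_two, Finset.univ_unique, Fin.default_eq_zero,
    Finset.sum_singleton, scaledSchurComplement, of_apply]
  simp only [hB.apply 0 1, hB.apply 0 2, hB.apply 1 2]
  ring

lemma IsSymm.det_scaledSchurComplement (hB : B.IsSymm) :
    (scaledSchurComplement B).det = B 0 0 * B.det := by
  simp only [det_fin_two, det_fin_three, scaledSchurComplement, of_apply, Fin.succ_zero_eq_one,
    Fin.succ_one_eq_two]
  simp only [hB.apply 0 1, hB.apply 0 2, hB.apply 1 2]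
  ring

lemma PosDef.three_mul_sq_le_scaledSchurComplement (hB : B.PosDef)
    (hmin : ∀ w ≠ 0, B 0 0 ≤ w ⬝ᵥ B *ᵥ w) {y : Fin 2 → ℤ} (hy : y ≠ 0) :
    3 * B 0 0 ^ 2 ≤ 4 * (y ⬝ᵥ scaledSchurComplement B *ᵥ y) := by
  have hm : 0 < B 0 0 := hB.diag_pos
  obtain ⟨q, hq⟩ := Int.exists_four_mul_sq_le (B 0 0) (B 0 1 * y 0 + B 0 2 * y 1) hm
  have hle := hmin (Fin.cons q y) fun h =>
    hy (funext fun i => by simpa using congrFun h i.succ)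
  nlinarith [hB.isSymm_int.mul_dotProduct_mulVec_cons q y]

lemma PosDef.posDef_scaledSchurComplement (hB : B.PosDef)
    (hmin : ∀ w ≠ 0, B 0 0 ≤ w ⬝ᵥ B *ᵥ w) : (scaledSchurComplement B).PosDef :=
  posDef_of_isSymm_of_pos (isSymm_scaledSchurComplement hB.isSymm_int) fun y hy => by
    nlinarith [hB.three_mul_sq_le_scaledSchurComplement hmin hy, hB.diag_pos (i := 0)]

theorem PosDef.cube_le_det_fin_three (hA : A.PosDef) {v : Fin 3 → ℤ} (hv : v ≠ 0)
    (hmin : ∀ w ≠ 0, v ⬝ᵥ A *ᵥ v ≤ w ⬝ᵥ A *ᵥ w) :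
    27 * (v ⬝ᵥ A *ᵥ v) ^ 3 ≤ 64 * A.det := by
  obtain ⟨U, hU, hcorner, hle⟩ :=
    hA.exists_transpose_mul_mul_corner_eq exists_det_eq_one_col_eq_fin_three hv hmin
  have hB := hA.transpose_mul_mul hU
  rw [← det_transpose_mul_mul hU (A := A), ← hcorner]
  rw [← hcorner] at hle
  set B := Uᵀ * A * U
  have hm : 0 < B 0 0 := hB.diag_pos
  have hG := hB.posDef_scaledSchurComplement hle
  obtain ⟨y, hy, hymin⟩ := hG.exists_min_int
  have h1 := hB.three_mul_sq_le_scaledSchurComplement hle hy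
  have h2 := hG.three_mul_sq_le_det_fin_two hy hymin
  rw [hB.isSymm_int.det_scaledSchurComplement] at h2
  set Q := y ⬝ᵥ scaledSchurComplement B *ᵥ y
  have h3 : 9 * B 0 0 ^ 4 ≤ 16 * Q ^ 2 := by nlinarith
  nlinarith

end

lemma eq_transpose_mul_self_of_transpose_mul_mul {n : Type*} [Fintype n] [DecidableEq n]
    {A U P : Matrix n n ℤ} (hU : U.det = 1)
    (h : Uᵀ * A * U = Pᵀ * P) : A = (P * U⁻¹)ᵀ * (P * U⁻¹) := by
  have hinv : U * U⁻¹ = 1 := mul_nonsing_inv U (by simp [hU])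
  calc A = (U * U⁻¹)ᵀ * A * (U * U⁻¹) := by simp [hinv]
    _ = (U⁻¹)ᵀ * (Uᵀ * A * U) * U⁻¹ := by simp only [transpose_mul, Matrix.mul_assoc]
    _ = (P * U⁻¹)ᵀ * (P * U⁻¹) := by rw [h]; simp only [transpose_mul, Matrix.mul_assoc]

theorem PosDef.exists_eq_transpose_mul_self_fin_two {A : Matrix (Fin 2) (Fin 2) ℤ}
    (hA : A.PosDef) (hdet : A.det = 1) : ∃ P : Matrix (Fin 2) (Fin 2) ℤ, A = Pᵀ * P := by
  obtain ⟨v, hv, hmin⟩ := hA.exists_min_int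
  have hm1 : v ⬝ᵥ A *ᵥ v = 1 := by
    nlinarith [hA.three_mul_sq_le_det_fin_two hv hmin, hA.dotProduct_mulVec_pos_int hv]
  obtain ⟨U, hU, hcorner, -⟩ :=
    hA.exists_transpose_mul_mul_corner_eq exists_det_eq_one_col_eq_fin_two hv hmin
  have hB := (hA.transpose_mul_mul hU).isSymm_int
  have hdetB := det_transpose_mul_mul hU (A := A)
  generalize hBdef : Uᵀ * A * U = B at hB hdetB hcorner
  refine ⟨!![1, B 0 1; 0, 1] * U⁻¹,
    eq_transpose_mul_self_of_transpose_mul_mul hU (hBdef.trans ?_)⟩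
  rw [hm1] at hcorner
  rw [det_fin_two, hdet, hcorner, hB.apply 0 1] at hdetB
  ext i j
  fin_cases i <;> fin_cases j <;> simp [mul_apply, Fin.sum_univ_two, hcorner, hB.apply 0 1]
  linear_combination hdetB

theorem PosDef.exists_eq_transpose_mul_self_fin_three {A : Matrix (Fin 3) (Fin 3) ℤ}
    (hA : A.PosDef) (hdet : A.det = 1) : ∃ P : Matrix (Fin 3) (Fin 3) ℤ, A = Pᵀ * P := by
  obtain ⟨v, hv, hmin⟩ := hA.exists_min_int
  have hm1 : v ⬝ᵥ A *ᵥ v = 1 := by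
    have hcube := hA.cube_le_det_fin_three hv hmin
    have hpos := hA.dotProduct_mulVec_pos_int hv
    by_contra hne
    have h2 : 2 ≤ v ⬝ᵥ A *ᵥ v := by omega
    nlinarith [pow_le_pow_left₀ (by norm_num) h2 3]
  obtain ⟨U, hU, hcorner, hle⟩ :=
    hA.exists_transpose_mul_mul_corner_eq exists_det_eq_one_col_eq_fin_three hv hmin
  have hB := hA.transpose_mul_mul hU
  have hdetB := det_transpose_mul_mul hU (A := A)
  rw [hm1] at hcorner hle
  generalize hBdef : Uᵀ * A * U = B at hB hdetB hcorner hle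
  have hG := hB.posDef_scaledSchurComplement (by rwa [hcorner])
  have hGdet : (scaledSchurComplement B).det = 1 := by
    rw [hB.isSymm_int.det_scaledSchurComplement, hcorner, hdetB, hdet, one_mul]
  obtain ⟨M, hM⟩ := hG.exists_eq_transpose_mul_self_fin_two hGdet
  refine ⟨!![1, B 0 1, B 0 2; 0, M 0 0, M 0 1; 0, M 1 0, M 1 1] * U⁻¹,
    eq_transpose_mul_self_of_transpose_mul_mul hU (hBdef.trans ?_)⟩
  have hGM (i j : Fin 2) : B i.succ j.succ - B 0 i.succ * B 0 j.succ = (Mᵀ * M) i j := by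
    rw [← hM]; simp [scaledSchurComplement, hcorner]
  have h00 := hGM 0 0
  have h01 := hGM 0 1
  have h11 := hGM 1 1
  simp only [mul_apply, Fin.sum_univ_two, transpose_apply, Fin.succ_zero_eq_one,
    Fin.succ_one_eq_two] at h00 h01 h11
  have hs := hB.isSymm_int
  ext i j
  fin_cases i <;> fin_cases j <;> simp [mul_apply, Fin.sum_univ_three, hcorner] <;>
    linarith [hs.apply 0 1, hs.apply 0 2, hs.apply 1 2]

end Matrix

lemma exists_prime_mod_four_eq_one_dvd_add_one {N : ℕ} (hN : N % 4 = 1) :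
    ∃ p : ℕ, p.Prime ∧ N < p ∧ p % 4 = 1 ∧ N ∣ p + 1 := by
  have : NeZero (4 * N) := ⟨by omega⟩
  have hunit : IsUnit ((2 * N - 1 : ℕ) : ZMod (4 * N)) := by
    refine (ZMod.isUnit_iff_coprime _ _).mpr (Nat.isCoprime_iff_coprime.mp ⟨-(2 * N + 1), N, ?_⟩)
    push_cast [Nat.cast_sub (by omega : 1 ≤ 2 * N)]
    ring
  obtain ⟨p, hpN, hp, hpa⟩ := Nat.forall_exists_prime_gt_and_eq_mod hunit N
  have hmod := (ZMod.natCast_eq_natCast_iff _ _ _).mp hpa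
  refine ⟨p, hp, hpN, ?_, ?_⟩
  · have := hmod.of_mul_right N
    unfold Nat.ModEq at this
    omega
  · have := (hmod.of_mul_left 4).add_right 1
    rw [Nat.sub_add_cancel (by omega)] at this
    exact Nat.modEq_zero_iff_dvd.mp (this.trans (Nat.modEq_zero_iff_dvd.mpr (dvd_mul_left N 2)))

lemma isSquare_neg_of_dvd_add_one {N p : ℕ} [Fact p.Prime] (hN : N % 4 = 1) (hp : p % 4 = 1)
    (hNp : N ∣ p + 1) (hpN : ¬ p ∣ N) : IsSquare (-(N : ZMod p)) := by
  have hNodd : Odd N := Nat.odd_iff.mpr (by omega)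
  have hpN' : ((-(N : ℤ) : ℤ) : ZMod p) ≠ 0 := by
    simpa [ZMod.natCast_eq_zero_iff] using hpN
  have hcong : (p : ℤ) ≡ -1 [ZMOD N] :=
    (Int.modEq_iff_dvd.mpr (by simpa using Int.natCast_dvd_natCast.mpr hNp)).symm
  have hL : legendreSym p (-N) = 1 := by
    rw [neg_eq_neg_one_mul, legendreSym.mul, legendreSym.at_neg_one (by omega),
      ZMod.χ₄_nat_one_mod_four hp, jacobiSym.legendreSym.to_jacobiSym,
      ← jacobiSym.quadratic_reciprocity_one_mod_four hp hNodd, jacobiSym.mod_left' hcong,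
      jacobiSym.at_neg_one hNodd, ZMod.χ₄_nat_one_mod_four hN, one_mul]
  simpa using (legendreSym.eq_one_iff p hpN').mp hL

lemma exists_mul_sub_sq_eq_cube_add_one {N : ℕ} (hN : N % 4 = 1) :
    ∃ p b c : ℤ, 0 < p ∧ N * (p * c - b ^ 2) = p ^ 3 + 1 := by
  obtain ⟨p, hp, hpN, hp4, hNp⟩ := exists_prime_mod_four_eq_one_dvd_add_one hN
  have : Fact p.Prime := ⟨hp⟩
  obtain ⟨D, hD⟩ : (N : ℤ) ∣ p ^ 3 + 1 :=
    (Int.natCast_dvd_natCast.mpr hNp).trans ⟨p ^ 2 - p + 1, by push_cast; ring⟩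
  obtain ⟨u, hu⟩ := isSquare_neg_of_dvd_add_one hN hp4 hNp
    fun h => (Nat.le_of_dvd (by omega) h).not_gt hpN
  have hND : (N : ZMod p) * D = 1 := by
    simpa using congrArg (Int.cast : ℤ → ZMod p) hD.symm
  obtain ⟨c, hc⟩ : (p : ℤ) ∣ ((u * D).val : ℤ) ^ 2 + D := by
    rw [← ZMod.intCast_zmod_eq_zero_iff_dvd]
    push_cast
    rw [ZMod.natCast_zmod_val]
    linear_combination (D : ZMod p) ^ 2 * hu.symm - D * hND
  refine ⟨p, (u * D).val, c, by exact_mod_cast hp.pos, ?_⟩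
  rw [hD, ← hc]
  ring

lemma posDef_of_mul_sub_sq_eq {N p b c : ℤ} (hN : 0 < N) (hp : 0 < p)
    (h : N * (p * c - b ^ 2) = p ^ 3 + 1) : (!![N, 0, p; 0, p, b; p, b, c]).PosDef := by
  refine posDef_of_isSymm_of_pos (by ext i j; fin_cases i <;> fin_cases j <;> rfl) fun x hx => ?_
  have hid : N * p * (x ⬝ᵥ !![N, 0, p; 0, p, b; p, b, c] *ᵥ x) =
      p * (N * x 0 + p * x 2) ^ 2 + N * (p * x 1 + b * x 2) ^ 2 + x 2 ^ 2 := by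
    simp only [dotProduct, mulVec, of_apply, cons_val', cons_val_fin_one, Fin.sum_univ_three,
      cons_val_zero, cons_val_one, cons_val, zero_mul, add_zero, zero_add]
    linear_combination x 2 ^ 2 * h
  by_contra hle
  have hNp : N * p * (x ⬝ᵥ !![N, 0, p; 0, p, b; p, b, c] *ᵥ x) ≤ 0 :=
    mul_nonpos_of_nonneg_of_nonpos (by positivity) (not_lt.mp hle)
  have t0 := mul_nonneg hp.le (sq_nonneg (N * x 0 + p * x 2))
  have t1 := mul_nonneg hN.le (sq_nonneg (p * x 1 + b * x 2))
  have t2 := sq_nonneg (x 2)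
  have e0 : p * (N * x 0 + p * x 2) ^ 2 = 0 := by linarith
  have e1 : N * (p * x 1 + b * x 2) ^ 2 = 0 := by linarith
  have e2 : x 2 ^ 2 = 0 := by linarith
  simp only [mul_eq_zero, hp.ne', hN.ne', false_or, pow_eq_zero_iff two_ne_zero] at e0 e1 e2
  simp only [e2, mul_zero, add_zero, mul_eq_zero, hp.ne', hN.ne', false_or] at e0 e1
  exact hx (funext fun i => by fin_cases i <;> simp [e0, e1, e2])

theorem Nat.sum_three_sq_of_mod_four_eq_one {N : ℕ} (hN : N % 4 = 1) :
    ∃ r s t : ℤ, (N : ℤ) = r ^ 2 + s ^ 2 + t ^ 2 := by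
  obtain ⟨p, b, c, hp, h⟩ := exists_mul_sub_sq_eq_cube_add_one hN
  have hdet : (!![(N : ℤ), 0, p; 0, p, b; p, b, c]).det = 1 := by
    rw [det_fin_three]
    simp only [of_apply, cons_val', cons_val_zero, cons_val_one, cons_val_two, empty_val',
      cons_val_fin_one, head_cons, tail_cons, head_fin_const]
    linear_combination h
  obtain ⟨P, hP⟩ :=
    (posDef_of_mul_sub_sq_eq (by omega) hp h).exists_eq_transpose_mul_self_fin_three hdet
  refine ⟨P 0 0, P 1 0, P 2 0, ?_⟩
  simpa [mul_apply, Fin.sum_univ_three, sq] using congrFun (congrFun hP 0) 0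

lemma exists_eq_sq_add_sq_add_sq_add_self {n : ℕ} {r s t : ℤ}
    (h : ((4 * n + 1 : ℕ) : ℤ) = r ^ 2 + s ^ 2 + t ^ 2) :
    ∃ u v w : ℕ, n = u ^ 2 + v ^ 2 + w ^ 2 + w := by
  have h' : 4 * n + 1 = r.natAbs ^ 2 + s.natAbs ^ 2 + t.natAbs ^ 2 := by
    zify; simpa [Int.natAbs_sq] using h
  generalize r.natAbs = a, s.natAbs = b, t.natAbs = c at h'
  obtain ⟨a, rfl | rfl⟩ := Nat.even_or_odd' a <;> obtain ⟨b, rfl | rfl⟩ := Nat.even_or_odd' b <;>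
    obtain ⟨c, rfl | rfl⟩ := Nat.even_or_odd' c <;> ring_nf at h' <;> try omega
  exacts [⟨a, b, c, by linarith⟩, ⟨a, c, b, by linarith⟩, ⟨b, c, a, by linarith⟩]

lemma exists_two_mul_sq_add_sq_add_self_eq (u w : ℕ) :
    ∃ y, 2 * (u ^ 2 + w ^ 2 + w) = y * (y + 1) + (u + w) * (u + w + 1) := by
  rcases le_or_gt u w with h | h
  · obtain ⟨k, rfl⟩ := Nat.exists_eq_add_of_le h
    exact ⟨k, by ring⟩
  · obtain ⟨k, rfl⟩ := Nat.exists_eq_add_of_lt h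
    exact ⟨k, by ring⟩

lemma eq_sq_add_tri_add_tri {n x y z : ℕ} (h : 2 * n = 2 * x ^ 2 + y * (y + 1) + z * (z + 1)) :
    n = x ^ 2 + y * (y + 1) / 2 + z * (z + 1) / 2 := by
  have hy := (Nat.even_mul_succ_self y).two_dvd
  have hz := (Nat.even_mul_succ_self z).two_dvd
  omega

lemma exists_sq_add_tri_add_tri_of_lt :
    ∀ n < 79, 28 ≤ n → ∃ x < 9, ∃ y < 12, ∃ z < 12, 7 ≤ z ∧
      n = x ^ 2 + y * (y + 1) / 2 + z * (z + 1) / 2 := by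
  decide

theorem stmt_14 : ∀ n : ℕ, 28 ≤ n → ∃ x y z : ℕ, 7 ≤ z ∧
    n = x ^ 2 + y * (y + 1) / 2 + z * (z + 1) / 2 := by
  intro n hn
  obtain ⟨r, s, t, hrst⟩ := Nat.sum_three_sq_of_mod_four_eq_one (N := 4 * n + 1) (by omega)
  obtain ⟨u, v, w, huvw⟩ := exists_eq_sq_add_sq_add_sq_add_self hrst
  wlog hvu : v ≤ u generalizing u v
  · exact this v u (by rw [huvw]; ring) (by omega)
  rcases le_or_gt 7 (u + w) with h7 | h7
  · obtain ⟨y, hy⟩ := exists_two_mul_sq_add_sq_add_self_eq u w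
    exact ⟨v, y, u + w, h7, eq_sq_add_tri_add_tri (by rw [huvw]; linarith)⟩
  · obtain ⟨x, -, y, -, z, -, hz, h⟩ := exists_sq_add_tri_add_tri_of_lt n (by nlinarith) hn
    exact ⟨x, y, z, hz, h⟩
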